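/- arXiv:1706.00857 — 3 statements merged into one kernel-verified Lean document; each statement's English description precedes it below -/
import Mathlib

section
/- Let m, T, d ≥ 1 and a, M ≥ 0. For each pair i, i' ∈ {1, …, m} and each lag l ∈ {0, 1, …, T−1}, let A_{i i', l} be a real d×d matrix with operator norm ‖A_{i i', l}‖_op ≤ a, and let σ_{i i', l} ∈ ℝ. Suppose there exist nonnegative numbers τ_{i i'} with τ_{i i'} = τ_{i' i}, Σ_{l=0}^{T−1} |σ_{i i', l}| ≤ τ_{i i'} for all i, i', and max_i Σ_{i'=1}^m τ_{i i'} ≤ M. Then for every v = (v_1ᵀ, …, v_mᵀ)ᵀ ∈ ℝ^{md}, |Σ_{t=1}^T Σ_{t'=1}^T Σ_{i=1}^m Σ_{i'=1}^m σ_{i i', |t−t'|} · v_iᵀ A_{i i', |t−t'|} v_{i'}| ≤ 2 T a M Σ_{i=1}^m ‖v_i‖². -/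
open Matrix

/-- The `ℓ²` operator (spectral) norm of a real matrix. -/
noncomputable def matOpNorm {n m : Type*} [Fintype n] [Fintype m] [DecidableEq n]
    (M : Matrix m n ℝ) : ℝ :=
  ‖LinearMap.toContinuousLinearMap (Matrix.toEuclideanLin M)‖

/-!
Each block satisfies `|vᵢᵀ A vᵢ'| ≤ a ‖vᵢ‖ ‖vᵢ'‖`. For fixed `t`, every lag `l < T` equals
`|t − t'|` for at most two `t' < T`, so the lag double sum of `|σᵢᵢ'|` is at most `2 T τᵢᵢ'`.
What is left, `∑ τᵢᵢ' ‖vᵢ‖ ‖vᵢ'‖`, is at most `M ∑ ‖vᵢ‖²` by `2xy ≤ x² + y²`, since the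
symmetry of `τ` turns its column sums into row sums (Schur's test).
-/

open Finset

section
variable {n : Type*} [Fintype n]

lemma dotProduct_self_eq_norm_toLp_sq (v : n → ℝ) : v ⬝ᵥ v = ‖WithLp.toLp 2 v‖ ^ 2 := by
  rw [← real_inner_self_eq_norm_sq, EuclideanSpace.inner_toLp_toLp, star_trivial]

lemma abs_dotProduct_mulVec_le [DecidableEq n] (B : Matrix n n ℝ) (v w : n → ℝ) :
    |v ⬝ᵥ B *ᵥ w| ≤ matOpNorm B * ‖WithLp.toLp 2 v‖ * ‖WithLp.toLp 2 w‖ := by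
  have hinner : v ⬝ᵥ B *ᵥ w = inner ℝ (WithLp.toLp 2 v) (B.toEuclideanLin (WithLp.toLp 2 w)) := by
    rw [EuclideanSpace.inner_eq_star_dotProduct, star_trivial, dotProduct_comm]; rfl
  rw [hinner]
  calc _ ≤ ‖WithLp.toLp 2 v‖ * ‖B.toEuclideanLin (WithLp.toLp 2 w)‖ := abs_real_inner_le_norm _ _
    _ ≤ ‖WithLp.toLp 2 v‖ * (matOpNorm B * ‖WithLp.toLp 2 w‖) := by
      gcongr
      exact (LinearMap.toContinuousLinearMap B.toEuclideanLin).le_opNorm _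
    _ = _ := by ring
end

theorem Finset.sum_sum_sum_sum_comm {α β M : Type*} [AddCommMonoid M] (s : Finset α)
    (t : Finset β) (F : α → α → β → β → M) :
    ∑ a ∈ s, ∑ a' ∈ s, ∑ b ∈ t, ∑ b' ∈ t, F a a' b b'
      = ∑ b ∈ t, ∑ b' ∈ t, ∑ a ∈ s, ∑ a' ∈ s, F a a' b b' := by
  simp only [← sum_product' s s, ← sum_product' t t]
  exact sum_comm

theorem Finset.sum_comp_le_nsmul_sum_of_card_fiber_le {ι κ M : Type*} [DecidableEq κ]
    [AddCommMonoid M] [PartialOrder M] [IsOrderedAddMonoid M]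
    {s : Finset ι} {t : Finset κ} {g : ι → κ} {f : κ → M} {n : ℕ}
    (hg : ∀ i ∈ s, g i ∈ t) (hf : ∀ k ∈ t, 0 ≤ f k)
    (hn : ∀ k ∈ t, #{i ∈ s | g i = k} ≤ n) :
    ∑ i ∈ s, f (g i) ≤ n • ∑ k ∈ t, f k := by
  rw [← sum_fiberwise_of_maps_to hg, smul_sum]
  refine sum_le_sum fun k hk => ?_
  rw [sum_congr rfl fun i hi => by rw [(mem_filter.1 hi).2], sum_const]
  exact nsmul_le_nsmul_left (hf k hk) (hn k hk)

lemma card_filter_natAbs_sub_eq_le_two (T t l : ℕ) :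
    #{t' ∈ range T | ((t : ℤ) - (t' : ℕ)).natAbs = l} ≤ 2 := by
  refine (card_le_card (s := _) (t := {t + l, t - l}) fun t' ht' => ?_).trans card_le_two
  simp only [mem_filter, mem_insert, mem_singleton] at ht' ⊢
  omega

lemma sum_range_natAbs_sub_le {M : Type*} [AddCommMonoid M] [PartialOrder M] [IsOrderedAddMonoid M]
    {T t : ℕ} (ht : t < T) {f : ℕ → M} (hf : ∀ l, 0 ≤ f l) :
    ∑ t' ∈ range T, f ((t : ℤ) - t').natAbs ≤ 2 • ∑ l ∈ range T, f l :=
  sum_comp_le_nsmul_sum_of_card_fiber_le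
    (fun t' ht' => mem_range.2 (by simp only [mem_range] at ht'; omega))
    (fun l _ => hf l) (fun l _ => card_filter_natAbs_sub_eq_le_two T t l)

theorem sum_sum_mul_mul_le_of_symm_of_row_sum_le {ι : Type*} [Fintype ι] {τ : ι → ι → ℝ}
    {M : ℝ} (hτ : ∀ i j, 0 ≤ τ i j) (hsymm : ∀ i j, τ i j = τ j i)
    (hrow : ∀ i, ∑ j, τ i j ≤ M) (x : ι → ℝ) :
    ∑ i, ∑ j, τ i j * x i * x j ≤ M * ∑ i, x i ^ 2 := by
  have hrows : ∑ i, ∑ j, τ i j * x i ^ 2 ≤ M * ∑ i, x i ^ 2 := by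
    rw [mul_sum]
    gcongr with i
    rw [← sum_mul]
    exact mul_le_mul_of_nonneg_right (hrow i) (sq_nonneg _)
  have hcols : ∑ i, ∑ j, τ i j * x j ^ 2 = ∑ i, ∑ j, τ i j * x i ^ 2 := by
    rw [sum_comm]
    simp only [hsymm]
  have hamgm : 2 * ∑ i, ∑ j, τ i j * x i * x j
      ≤ ∑ i, ∑ j, τ i j * x i ^ 2 + ∑ i, ∑ j, τ i j * x j ^ 2 := by
    simp only [mul_sum, ← sum_add_distrib]
    gcongr with i _ j
    nlinarith [mul_nonneg (hτ i j) (sq_nonneg (x i - x j))]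
  linarith

lemma abs_sum_sum_lag_mul_le {T : ℕ} {σ c : ℕ → ℝ} {τ K : ℝ}
    (hσ : ∑ l ∈ range T, |σ l| ≤ τ) (hc : ∀ l < T, |c l| ≤ K) (hK : 0 ≤ K) :
    |∑ t ∈ range T, ∑ t' ∈ range T,
        σ ((t : ℤ) - (t' : ℤ)).natAbs * c ((t : ℤ) - (t' : ℤ)).natAbs| ≤ 2 * T * τ * K := by
  calc _ ≤ ∑ t ∈ range T, ∑ t' ∈ range T, |σ ((t : ℤ) - (t' : ℤ)).natAbs| * K := by
        refine (abs_sum_le_sum_abs _ _).trans (sum_le_sum fun t ht => ?_)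
        refine (abs_sum_le_sum_abs _ _).trans (sum_le_sum fun t' ht' => ?_)
        rw [abs_mul]
        gcongr
        exact hc _ (by simp only [mem_range] at ht ht'; omega)
    _ ≤ ∑ t ∈ range T, 2 * τ * K := by
        refine sum_le_sum fun t ht => ?_
        rw [← sum_mul]
        gcongr
        calc _ ≤ 2 • ∑ l ∈ range T, |σ l| :=
              sum_range_natAbs_sub_le (mem_range.1 ht) fun l => abs_nonneg (σ l)
          _ ≤ 2 * τ := by rw [two_nsmul, two_mul]; gcongr
    _ = 2 * T * τ * K := by rw [sum_const, card_range, nsmul_eq_mul]; ring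

theorem block_covariance_quadratic_form_bound_general
    (m T d : ℕ)
    (a M : ℝ) (ha : 0 ≤ a)
    (A : Fin m → Fin m → ℕ → Matrix (Fin d) (Fin d) ℝ)
    (σ : Fin m → Fin m → ℕ → ℝ)
    (τ : Fin m → Fin m → ℝ)
    (hA : ∀ i i' l, l < T → matOpNorm (A i i' l) ≤ a)
    (hτnonneg : ∀ i i', 0 ≤ τ i i')
    (hτsymm : ∀ i i', τ i i' = τ i' i)
    (hστ : ∀ i i', ∑ l ∈ Finset.range T, |σ i i' l| ≤ τ i i')
    (hrow : ∀ i, ∑ i', τ i i' ≤ M) :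
    ∀ v : Fin m → Fin d → ℝ,
      |∑ t ∈ Finset.range T, ∑ t' ∈ Finset.range T, ∑ i, ∑ i',
          σ i i' ((t : ℤ) - (t' : ℤ)).natAbs *
            (v i ⬝ᵥ (A i i' ((t : ℤ) - (t' : ℤ)).natAbs) *ᵥ v i')| ≤
        2 * T * a * M * ∑ i, v i ⬝ᵥ v i := by
  intro v
  set x : Fin m → ℝ := fun i => ‖WithLp.toLp 2 (v i)‖
  rw [sum_sum_sum_sum_comm]
  calc _ ≤ ∑ i, ∑ i', |∑ t ∈ range T, ∑ t' ∈ range T, σ i i' ((t : ℤ) - (t' : ℤ)).natAbs *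
              (v i ⬝ᵥ (A i i' ((t : ℤ) - (t' : ℤ)).natAbs) *ᵥ v i')| :=
        (abs_sum_le_sum_abs _ _).trans (sum_le_sum fun i _ => abs_sum_le_sum_abs _ _)
    _ ≤ ∑ i, ∑ i', 2 * T * τ i i' * (a * x i * x i') := by
        refine sum_le_sum fun i _ => sum_le_sum fun i' _ => ?_
        refine abs_sum_sum_lag_mul_le (c := fun l => v i ⬝ᵥ A i i' l *ᵥ v i') (hστ i i')
          (fun l hl => ?_) (by positivity)
        refine (abs_dotProduct_mulVec_le _ _ _).trans ?_
        gcongr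
        exact hA i i' l hl
    _ = 2 * T * a * ∑ i, ∑ i', τ i i' * x i * x i' := by
        simp only [mul_sum]
        exact sum_congr rfl fun i _ => sum_congr rfl fun i' _ => by ring
    _ ≤ 2 * T * a * (M * ∑ i, x i ^ 2) := by
        gcongr
        exact sum_sum_mul_mul_le_of_symm_of_row_sum_le hτnonneg hτsymm hrow x
    _ = 2 * T * a * M * ∑ i, v i ⬝ᵥ v i := by
        simp only [x, dotProduct_self_eq_norm_toLp_sq]
        ring

/-- **Deterministic content of Lemma B.4 of the paper.**
With blockwise matrices `A_{i i', l}` of operator norm at most `a`, scalars `σ_{i i', l}`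
whose absolute lag-sums are bounded by symmetric quantities `τ_{i i'}` with row sums
bounded by `M`, the big quadratic form `∑_{t,t'} ∑_{i,i'} σ_{i i', |t−t'|} vᵢᵀ A_{i i', |t−t'|} v_{i'}`
is bounded in absolute value by `2 T a M ∑_i ‖v_i‖²`. -/
theorem block_covariance_quadratic_form_bound
    (m T d : ℕ) (hm : 1 ≤ m) (hT : 1 ≤ T) (hd : 1 ≤ d)
    (a M : ℝ) (ha : 0 ≤ a) (hM : 0 ≤ M)
    (A : Fin m → Fin m → ℕ → Matrix (Fin d) (Fin d) ℝ)
    (σ : Fin m → Fin m → ℕ → ℝ)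
    (τ : Fin m → Fin m → ℝ)
    (hA : ∀ i i' l, l < T → matOpNorm (A i i' l) ≤ a)
    (hτnonneg : ∀ i i', 0 ≤ τ i i')
    (hτsymm : ∀ i i', τ i i' = τ i' i)
    (hστ : ∀ i i', ∑ l ∈ Finset.range T, |σ i i' l| ≤ τ i i')
    (hrow : ∀ i, ∑ i', τ i i' ≤ M) :
    ∀ v : Fin m → Fin d → ℝ,
      |∑ t ∈ Finset.range T, ∑ t' ∈ Finset.range T, ∑ i, ∑ i',
          σ i i' ((t : ℤ) - (t' : ℤ)).natAbs *
            (v i ⬝ᵥ (A i i' ((t : ℤ) - (t' : ℤ)).natAbs) *ᵥ v i')| ≤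
        2 * T * a * M * ∑ i, v i ⬝ᵥ v i :=
  block_covariance_quadratic_form_bound_general m T d a M ha A σ τ hA hτnonneg hτsymm hστ hrow
end

section
/- Let n ≥ 1, let x, y ∈ ℝⁿ with |x_l − y_l| ≤ a for all l ∈ {1, …, n} and some a ≥ 0. For integers 1 ≤ s ≤ k < e ≤ n define the CUSUM statistic Δ_{s,e}(k; x) = √((e−k)(k−s+1)/(e−s+1)) · | (Σ_{l=k+1}^e x_l)/(e−k) − (Σ_{l=s}^k x_l)/(k−s+1) |, and Δ_{s,e}(k; y) analogously. Then for all such s, k, e, |Δ_{s,e}(k; x) − Δ_{s,e}(k; y)| ≤ √n · a. -/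
/-- The CUSUM statistic
`Δ_{s,e}(k; x) = √((e−k)(k−s+1)/(e−s+1)) · |(∑_{l=k+1}^e x_l)/(e−k) − (∑_{l=s}^k x_l)/(k−s+1)|`. -/
noncomputable def cusum (x : ℕ → ℝ) (s k e : ℕ) : ℝ :=
  Real.sqrt (((e : ℝ) - k) * ((k : ℝ) - s + 1) / ((e : ℝ) - s + 1)) *
    |(∑ l ∈ Finset.Icc (k + 1) e, x l) / ((e : ℝ) - k) -
      (∑ l ∈ Finset.Icc s k, x l) / ((k : ℝ) - s + 1)|

/-- **Perturbation bound (A.20) for the CUSUM statistic.**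
If `|x_l − y_l| ≤ a` for all `l ∈ {1,…,n}`, then for all `1 ≤ s ≤ k < e ≤ n`,
`|Δ_{s,e}(k; x) − Δ_{s,e}(k; y)| ≤ √n · a`. -/
theorem cusum_perturbation_bound
    (n : ℕ) (hn : 1 ≤ n) (x y : ℕ → ℝ) (a : ℝ) (ha : 0 ≤ a)
    (hxy : ∀ l ∈ Finset.Icc 1 n, |x l - y l| ≤ a) :
    ∀ s k e : ℕ, 1 ≤ s → s ≤ k → k < e → e ≤ n →
      |cusum x s k e - cusum y s k e| ≤ Real.sqrt n * a := by
  intro s k e hs hsk hke hen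
  have hs' : (1 : ℝ) ≤ (s : ℝ) := by exact_mod_cast hs
  have hsk' : (s : ℝ) ≤ (k : ℝ) := by exact_mod_cast hsk
  have hke' : (k : ℝ) + 1 ≤ (e : ℝ) := by exact_mod_cast hke
  have hen' : (e : ℝ) ≤ (n : ℝ) := by exact_mod_cast hen
  set p : ℝ := (e : ℝ) - k with hp
  set q : ℝ := (k : ℝ) - s + 1 with hq
  have hp1 : (1 : ℝ) ≤ p := by simp [hp]; linarith
  have hq1 : (1 : ℝ) ≤ q := by simp [hq]; linarith
  have hp0 : (0 : ℝ) < p := by linarith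
  have hq0 : (0 : ℝ) < q := by linarith
  set w : ℝ := p * q / ((e : ℝ) - s + 1) with hw
  have hes : (e : ℝ) - s + 1 = p + q := by simp [hp, hq]; ring
  have hw0 : 0 ≤ w := by
    rw [hw, hes]
    positivity
  -- bounds on the sums of differences
  have hsum1 : |∑ l ∈ Finset.Icc (k + 1) e, (x l - y l)| ≤ p * a := by
    calc |∑ l ∈ Finset.Icc (k + 1) e, (x l - y l)|
        ≤ ∑ l ∈ Finset.Icc (k + 1) e, |x l - y l| :=
          Finset.abs_sum_le_sum_abs _ _
      _ ≤ ∑ l ∈ Finset.Icc (k + 1) e, a := by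
          refine Finset.sum_le_sum fun l hl => ?_
          refine hxy l ?_
          simp only [Finset.mem_Icc] at hl ⊢
          omega
      _ = ((Finset.Icc (k + 1) e).card : ℝ) * a := by
          rw [Finset.sum_const, nsmul_eq_mul]
      _ = p * a := by
          rw [Nat.card_Icc]
          have : e + 1 - (k + 1) = e - k := by omega
          rw [this, hp]
          have : ((e - k : ℕ) : ℝ) = (e : ℝ) - k := by
            have : k ≤ e := le_of_lt hke
            push_cast [this]; ring
          rw [this]
  have hsum2 : |∑ l ∈ Finset.Icc s k, (x l - y l)| ≤ q * a := by
    calc |∑ l ∈ Finset.Icc s k, (x l - y l)|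
        ≤ ∑ l ∈ Finset.Icc s k, |x l - y l| := Finset.abs_sum_le_sum_abs _ _
      _ ≤ ∑ l ∈ Finset.Icc s k, a := by
          refine Finset.sum_le_sum fun l hl => ?_
          refine hxy l ?_
          simp only [Finset.mem_Icc] at hl ⊢
          omega
      _ = ((Finset.Icc s k).card : ℝ) * a := by
          rw [Finset.sum_const, nsmul_eq_mul]
      _ = q * a := by
          rw [Nat.card_Icc]
          have h1 : ((k + 1 - s : ℕ) : ℝ) = (k : ℝ) - s + 1 := by
            have : s ≤ k + 1 := by omega
            push_cast [this]; ring
          rw [h1, hq]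
  set Ax : ℝ := (∑ l ∈ Finset.Icc (k + 1) e, x l) / p -
      (∑ l ∈ Finset.Icc s k, x l) / q with hAx
  set Ay : ℝ := (∑ l ∈ Finset.Icc (k + 1) e, y l) / p -
      (∑ l ∈ Finset.Icc s k, y l) / q with hAy
  have hA : |Ax - Ay| ≤ 2 * a := by
    have hd : Ax - Ay = (∑ l ∈ Finset.Icc (k + 1) e, (x l - y l)) / p -
        (∑ l ∈ Finset.Icc s k, (x l - y l)) / q := by
      rw [hAx, hAy, Finset.sum_sub_distrib, Finset.sum_sub_distrib]
      field_simp
      ring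
    rw [hd]
    calc |(∑ l ∈ Finset.Icc (k + 1) e, (x l - y l)) / p -
        (∑ l ∈ Finset.Icc s k, (x l - y l)) / q|
        ≤ |(∑ l ∈ Finset.Icc (k + 1) e, (x l - y l)) / p| +
          |(∑ l ∈ Finset.Icc s k, (x l - y l)) / q| := abs_sub _ _
      _ ≤ a + a := by
          gcongr
          · rw [abs_div, abs_of_pos hp0, div_le_iff₀ hp0]
            calc |∑ l ∈ Finset.Icc (k + 1) e, (x l - y l)| ≤ p * a := hsum1
              _ = a * p := by ring
          · rw [abs_div, abs_of_pos hq0, div_le_iff₀ hq0]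
            calc |∑ l ∈ Finset.Icc s k, (x l - y l)| ≤ q * a := hsum2
              _ = a * q := by ring
      _ = 2 * a := by ring
  -- main estimate
  have hmain : |cusum x s k e - cusum y s k e| ≤ Real.sqrt w * |Ax - Ay| := by
    have hcx : cusum x s k e = Real.sqrt w * |Ax| := rfl
    have hcy : cusum y s k e = Real.sqrt w * |Ay| := rfl
    rw [hcx, hcy, ← mul_sub, abs_mul, abs_of_nonneg (Real.sqrt_nonneg _)]
    exact mul_le_mul_of_nonneg_left (abs_abs_sub_abs_le_abs_sub Ax Ay)
      (Real.sqrt_nonneg _)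
  have hwn : w ≤ (n : ℝ) / 4 := by
    rw [hw, hes]
    have hpq : p + q ≤ (n : ℝ) := by
      simp only [hp, hq]; linarith
    have h4 : 4 * (p * q) ≤ (p + q) * (p + q) := by nlinarith [sq_nonneg (p - q)]
    rw [div_le_div_iff₀ (by linarith) (by norm_num)]
    nlinarith
  have hsqrtw : Real.sqrt w ≤ Real.sqrt (n : ℝ) / 2 := by
    have h1 : Real.sqrt w ≤ Real.sqrt ((n : ℝ) / 4) := Real.sqrt_le_sqrt hwn
    have h2 : Real.sqrt ((n : ℝ) / 4) = Real.sqrt (n : ℝ) / 2 := by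
      rw [show ((n : ℝ) / 4) = (n : ℝ) * (1 / 2) ^ 2 by ring,
        Real.sqrt_mul (by positivity), Real.sqrt_sq (by norm_num)]
      ring
    linarith
  calc |cusum x s k e - cusum y s k e| ≤ Real.sqrt w * |Ax - Ay| := hmain
    _ ≤ (Real.sqrt (n : ℝ) / 2) * (2 * a) := by
        exact mul_le_mul hsqrtw hA (abs_nonneg _)
          (by positivity)
    _ = Real.sqrt (n : ℝ) * a := by ring
end

section
/- Let n ≥ 1, let x, y ∈ ℝⁿ with |x_l − y_l| ≤ a for all l and some a ≥ 0, and let 1 ≤ s ≤ e ≤ n be such that y is constant on the segment {s, …, e} (i.e. y_s = y_{s+1} = ⋯ = y_e). Then for every k with s ≤ k < e, the CUSUM statistic Δ_{s,e}(k; x) = √((e−k)(k−s+1)/(e−s+1)) · | (Σ_{l=k+1}^e x_l)/(e−k) − (Σ_{l=s}^k x_l)/(k−s+1) | satisfies Δ_{s,e}(k; x) ≤ √n · a. -/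
/-- **CUSUM bound on a change-point-free segment (Step 3 of the proof of Theorem 2).**
If `|x_l − y_l| ≤ a` for all `l` and `y` is constant on the segment `{s,…,e}`, then
for every `k` with `s ≤ k < e`, the CUSUM statistic of `x` on `(s,e)` is at most `√n · a`. -/
theorem cusum_bound_on_constant_segment
    (n : ℕ) (hn : 1 ≤ n) (x y : ℕ → ℝ) (a : ℝ) (ha : 0 ≤ a)
    (hxy : ∀ l ∈ Finset.Icc 1 n, |x l - y l| ≤ a)
    (s e : ℕ) (hs : 1 ≤ s) (hse : s ≤ e) (hen : e ≤ n)
    (hconst : ∀ l ∈ Finset.Icc s e, y l = y s) :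
    ∀ k : ℕ, s ≤ k → k < e → cusum x s k e ≤ Real.sqrt n * a := by
  intro k hsk hke
  set c := y s with hc
  -- mean bound on subintervals of [s,e]
  have key : ∀ p q : ℕ, s ≤ p → p ≤ q → q ≤ e →
      |(∑ l ∈ Finset.Icc p q, x l) / ((q : ℝ) - p + 1) - c| ≤ a := by
    intro p q hp hpq hqe
    have hm : (0 : ℝ) < (q : ℝ) - p + 1 := by
      have : (p : ℝ) ≤ q := by exact_mod_cast hpq
      linarith
    have hcard : ((Finset.Icc p q).card : ℝ) = (q : ℝ) - p + 1 := by
      rw [Nat.card_Icc, Nat.cast_sub (by omega)]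
      push_cast; ring
    have hsum : |(∑ l ∈ Finset.Icc p q, x l) - ((q : ℝ) - p + 1) * c| ≤
        ((q : ℝ) - p + 1) * a := by
      have : (∑ l ∈ Finset.Icc p q, x l) - ((q : ℝ) - p + 1) * c
          = ∑ l ∈ Finset.Icc p q, (x l - c) := by
        rw [Finset.sum_sub_distrib, ← hcard, Finset.sum_const, nsmul_eq_mul]
      rw [this, ← hcard]
      calc |∑ l ∈ Finset.Icc p q, (x l - c)| ≤ ∑ l ∈ Finset.Icc p q, |x l - c| :=
            Finset.abs_sum_le_sum_abs _ _
        _ ≤ ∑ l ∈ Finset.Icc p q, a := by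
            apply Finset.sum_le_sum
            intro l hl
            rw [Finset.mem_Icc] at hl
            have hyc : y l = c := hconst l (Finset.mem_Icc.mpr ⟨le_trans hp hl.1, le_trans hl.2 hqe⟩)
            rw [← hyc]
            exact hxy l (Finset.mem_Icc.mpr ⟨le_trans hs (le_trans hp hl.1), le_trans hl.2 (le_trans hqe hen)⟩)
        _ = ((Finset.Icc p q).card : ℝ) * a := by rw [Finset.sum_const, nsmul_eq_mul]
    have heq : (∑ l ∈ Finset.Icc p q, x l) / ((q : ℝ) - p + 1) - c =
        ((∑ l ∈ Finset.Icc p q, x l) - ((q : ℝ) - p + 1) * c) / ((q : ℝ) - p + 1) := by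
      field_simp
    rw [heq, abs_div, abs_of_pos hm, div_le_iff₀ hm]
    linarith [hsum]
  -- apply to the two halves
  have h1 : |(∑ l ∈ Finset.Icc (k + 1) e, x l) / ((e : ℝ) - k) - c| ≤ a := by
    have := key (k + 1) e (by omega) (by omega) le_rfl
    have heq : (e : ℝ) - (k + 1 : ℕ) + 1 = (e : ℝ) - k := by push_cast; ring
    rwa [heq] at this
  have h2 : |(∑ l ∈ Finset.Icc s k, x l) / ((k : ℝ) - s + 1) - c| ≤ a :=
    key s k le_rfl hsk (le_of_lt hke)
  have hdiff : |(∑ l ∈ Finset.Icc (k + 1) e, x l) / ((e : ℝ) - k) -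
      (∑ l ∈ Finset.Icc s k, x l) / ((k : ℝ) - s + 1)| ≤ 2 * a := by
    calc |(∑ l ∈ Finset.Icc (k + 1) e, x l) / ((e : ℝ) - k) -
        (∑ l ∈ Finset.Icc s k, x l) / ((k : ℝ) - s + 1)|
        = |((∑ l ∈ Finset.Icc (k + 1) e, x l) / ((e : ℝ) - k) - c) -
            ((∑ l ∈ Finset.Icc s k, x l) / ((k : ℝ) - s + 1) - c)| := by ring_nf
      _ ≤ _ + _ := abs_sub _ _
      _ ≤ 2 * a := by linarith
  -- sqrt factor bound
  have hu : (0 : ℝ) < (e : ℝ) - k := by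
    have : (k : ℝ) < e := by exact_mod_cast hke
    linarith
  have hv : (0 : ℝ) < (k : ℝ) - s + 1 := by
    have : (s : ℝ) ≤ k := by exact_mod_cast hsk
    linarith
  have hratio : ((e : ℝ) - k) * ((k : ℝ) - s + 1) / ((e : ℝ) - s + 1) ≤ (n : ℝ) / 4 := by
    have hn' : (e : ℝ) - s + 1 ≤ n := by
      have h1 : (1 : ℝ) ≤ s := by exact_mod_cast hs
      have h2 : (e : ℝ) ≤ n := by exact_mod_cast hen
      linarith
    rw [div_le_div_iff₀ (by linarith) (by norm_num)]
    nlinarith [sq_nonneg (((e : ℝ) - k) - ((k : ℝ) - s + 1)), hu, hv]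
  have hsqrt : Real.sqrt (((e : ℝ) - k) * ((k : ℝ) - s + 1) / ((e : ℝ) - s + 1)) ≤
      Real.sqrt n / 2 := by
    calc Real.sqrt (((e : ℝ) - k) * ((k : ℝ) - s + 1) / ((e : ℝ) - s + 1))
        ≤ Real.sqrt ((n : ℝ) / 4) := Real.sqrt_le_sqrt hratio
      _ = Real.sqrt n / 2 := by
          rw [Real.sqrt_div (Nat.cast_nonneg n), show ((4 : ℝ)) = 2 ^ 2 by norm_num,
            Real.sqrt_sq (by norm_num : (0 : ℝ) ≤ 2)]
  -- conclude
  unfold cusum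
  calc Real.sqrt (((e : ℝ) - k) * ((k : ℝ) - s + 1) / ((e : ℝ) - s + 1)) *
      |(∑ l ∈ Finset.Icc (k + 1) e, x l) / ((e : ℝ) - k) -
        (∑ l ∈ Finset.Icc s k, x l) / ((k : ℝ) - s + 1)|
      ≤ (Real.sqrt n / 2) * (2 * a) :=
        mul_le_mul hsqrt hdiff (abs_nonneg _) (by positivity)
    _ = Real.sqrt n * a := by ring
end
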